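/- arXiv:2307.02043 — 4 statements merged into one kernel-verified Lean document; each statement's English description precedes it below -/
import Mathlib

section
/- Structured weighted proximal mapping (rank-one-corrected metric, plus case): let W = Σ + UUᵀ be positive definite with Σ diagonal positive definite and U ∈ ℝ^{N×r}. If β* ∈ ℝ^r satisfies Uᵀ(x − prox_g^Σ(x − Σ^{-1}Uβ*)) + β* = 0, then prox_g^W(x) = prox_g^Σ(x − Σ^{-1}Uβ*). -/
open Matrix

/-- The squared `W`-norm: `‖v‖²_W = vᵀ W v`. -/
noncomputable def wnormSq {N : ℕ} (W : Matrix (Fin N) (Fin N) ℝ) (v : Fin N → ℝ) : ℝ :=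
  v ⬝ᵥ (W *ᵥ v)

/-- `p` is a weighted proximal point of `x`, i.e. a minimizer of
`u ↦ g u + (1/2)‖u − x‖²_W`. -/
def IsWProx {N : ℕ} (g : (Fin N → ℝ) → ℝ) (W : Matrix (Fin N) (Fin N) ℝ)
    (x p : Fin N → ℝ) : Prop :=
  ∀ u, g p + (1 / 2) * wnormSq W (p - x) ≤ g u + (1 / 2) * wnormSq W (u - x)

lemma dot_self_nonneg' {n : ℕ} (v : Fin n → ℝ) : 0 ≤ v ⬝ᵥ v :=
  Finset.sum_nonneg fun i _ => mul_self_nonneg (v i)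

/-- Structured WPM (rank-corrected metric, plus case): if `W = Σ + UUᵀ` is positive definite
with `Σ` diagonal positive definite, and `β*` solves
`Uᵀ(x − prox_g^Σ(x − Σ⁻¹Uβ*)) + β* = 0`, then `prox_g^W(x) = prox_g^Σ(x − Σ⁻¹Uβ*)`. -/
theorem stmt6 {N r : ℕ} (g : (Fin N → ℝ) → ℝ)
    (hg : ConvexOn ℝ Set.univ g) (hlsc : LowerSemicontinuous g)
    (S : Matrix (Fin N) (Fin N) ℝ) (hSd : S.IsDiag) (hS : S.PosDef)
    (U : Matrix (Fin N) (Fin r) ℝ) (hW : (S + U * Uᵀ).PosDef)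
    (x : Fin N → ℝ) (β : Fin r → ℝ) (p : Fin N → ℝ)
    (hp : IsWProx g S (x - S⁻¹ *ᵥ (U *ᵥ β)) p)
    (hroot : Uᵀ *ᵥ (x - p) + β = 0) :
    IsWProx g (S + U * Uᵀ) x p := by
  intro u
  set b : Fin N → ℝ := S⁻¹ *ᵥ (U *ᵥ β) with hb
  have hSsymm : Sᵀ = S := hS.isHermitian
  have hdet : IsUnit S.det := isUnit_iff_ne_zero.mpr hS.det_pos.ne'
  have hSb : S *ᵥ b = U *ᵥ β := by
    rw [hb, Matrix.mulVec_mulVec, Matrix.mul_nonsing_inv S hdet, Matrix.one_mulVec]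
  have hβ : β = Uᵀ *ᵥ (p - x) := by
    have : β = -(Uᵀ *ᵥ (x - p)) := by linear_combination hroot
    rw [this, ← Matrix.mulVec_neg, neg_sub]
  -- transpose trick: v ᵥ* U = Uᵀ *ᵥ v
  have hvm : ∀ (v : Fin N → ℝ), v ᵥ* U = Uᵀ *ᵥ v := by
    intro v
    rw [← Matrix.vecMul_transpose, Matrix.transpose_transpose]
  -- W-norm splits
  have hW1 : ∀ v : Fin N → ℝ,
      wnormSq (S + U * Uᵀ) v = wnormSq S v + (Uᵀ *ᵥ v) ⬝ᵥ (Uᵀ *ᵥ v) := by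
    intro v
    simp only [wnormSq, Matrix.add_mulVec, dotProduct_add]
    congr 1
    rw [← Matrix.mulVec_mulVec, Matrix.dotProduct_mulVec, hvm]
  -- symmetry of S in dot products
  have hsymS : ∀ v w : Fin N → ℝ, v ⬝ᵥ (S *ᵥ w) = w ⬝ᵥ (S *ᵥ v) := by
    intro v w
    rw [Matrix.dotProduct_mulVec, ← Matrix.mulVec_transpose, hSsymm, dotProduct_comm]
  -- expansion of S-norm of a sum
  have hS2 : ∀ v w : Fin N → ℝ,
      wnormSq S (v + w) = wnormSq S v + 2 * (v ⬝ᵥ (S *ᵥ w)) + wnormSq S w := by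
    intro v w
    simp only [wnormSq, Matrix.mulVec_add, dotProduct_add, add_dotProduct]
    rw [hsymS w v]; ring
  -- the key identity
  have key : ∀ v : Fin N → ℝ,
      wnormSq (S + U * Uᵀ) (v - x) + (wnormSq S b + β ⬝ᵥ β)
        = wnormSq S (v - (x - b)) + (Uᵀ *ᵥ (v - p)) ⬝ᵥ (Uᵀ *ᵥ (v - p)) := by
    intro v
    have h1 : v - (x - b) = (v - x) + b := by ring
    have h2 : Uᵀ *ᵥ (v - p) = Uᵀ *ᵥ (v - x) - β := by
      rw [hβ, ← Matrix.mulVec_sub]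
      congr 1; ring
    rw [h1, hS2, hW1, h2]
    have h3 : (v - x) ⬝ᵥ (S *ᵥ b) = (Uᵀ *ᵥ (v - x)) ⬝ᵥ β := by
      rw [hSb, Matrix.dotProduct_mulVec, hvm]
    rw [h3]
    simp only [sub_dotProduct, dotProduct_sub]
    rw [dotProduct_comm β (Uᵀ *ᵥ (v - x))]
    ring
  have keyu := key u
  have keyp := key p
  have hqp : (Uᵀ *ᵥ (p - p)) ⬝ᵥ (Uᵀ *ᵥ (p - p)) = 0 := by
    simp [sub_self]
  have hqu : 0 ≤ (Uᵀ *ᵥ (u - p)) ⬝ᵥ (Uᵀ *ᵥ (u - p)) := dot_self_nonneg' _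
  have hpu := hp u
  linarith
end

section
/- Uniqueness of the auxiliary root in the structured WPM: with W = Σ + UUᵀ positive definite, Σ diagonal positive definite, U ∈ ℝ^{N×r}, and g proper closed convex, the map φ(β) = Uᵀ(x − prox_g^Σ(x − Σ^{-1}Uβ)) + β has at most one zero β* ∈ ℝ^r. -/
/-!
The weighted proximal map is firmly nonexpansive in the `Σ`-metric: adding the variational
inequalities of two proximal points `p₁, p₂` of `y₁, y₂` gives
`‖p₁ - p₂‖²_Σ ≤ (p₁ - p₂)ᵀ Σ (y₁ - y₂)`. For two zeros `β₁, β₂` of `φ` we have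
`Uᵀ (p₁ - p₂) = β₁ - β₂` and `y₁ - y₂ = -Σ⁻¹ U (β₁ - β₂)`, so the right-hand side equals
`-‖β₁ - β₂‖²`, which forces `β₁ = β₂`.
-/

open Matrix

section WeightedProx

variable {N : ℕ} {S : Matrix (Fin N) (Fin N) ℝ}

lemma wnormSq_nonneg (hS : S.PosSemidef) (v : Fin N → ℝ) : 0 ≤ wnormSq S v := by
  simpa [wnormSq, dotProduct] using hS.re_dotProduct_nonneg v

lemma wnormSq_add_smul (hS : S.IsSymm) (a b : Fin N → ℝ) (t : ℝ) :
    wnormSq S (a + t • b) =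
      wnormSq S a + 2 * t * (b ⬝ᵥ (S *ᵥ a)) + t ^ 2 * wnormSq S b := by
  have hba : b ⬝ᵥ (S *ᵥ a) = a ⬝ᵥ (S *ᵥ b) := by
    rw [dotProduct_mulVec, ← mulVec_transpose, hS.eq, dotProduct_comm]
  simp only [wnormSq, mulVec_add, mulVec_smul, dotProduct_add, add_dotProduct,
    dotProduct_smul, smul_dotProduct, smul_eq_mul, hba]
  ring

lemma nonneg_of_forall_nonneg_add_mul {A B : ℝ}
    (h : ∀ t : ℝ, 0 < t → t ≤ 1 → 0 ≤ A + t * B) : 0 ≤ A := by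
  refine le_of_forall_pos_le_add fun ε hε => ?_
  set t := min 1 (ε / (|B| + 1))
  have ht : 0 < t := lt_min one_pos (by positivity)
  have htε : t * (|B| + 1) ≤ ε := (le_div_iff₀ (by positivity)).1 (min_le_right _ _)
  have htB : t * B ≤ t * |B| := mul_le_mul_of_nonneg_left (le_abs_self B) ht.le
  nlinarith [h t ht (min_le_left _ _)]

variable {g : (Fin N → ℝ) → ℝ} {y p : Fin N → ℝ}

/-- Compare `p` with `p + t • (u - p)` in the minimization and let `t → 0⁺`. -/
lemma IsWProx.variational_ineq (hg : ConvexOn ℝ Set.univ g) (hS : S.IsSymm)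
    (hp : IsWProx g S y p) (u : Fin N → ℝ) :
    0 ≤ g u - g p + (u - p) ⬝ᵥ (S *ᵥ (p - y)) := by
  refine nonneg_of_forall_nonneg_add_mul (B := (1 / 2) * wnormSq S (u - p)) fun t ht0 ht1 => ?_
  have hconv : g (p + t • (u - p)) ≤ (1 - t) * g p + t * g u := by
    have h := hg.2 (Set.mem_univ p) (Set.mem_univ u) (sub_nonneg.2 ht1) ht0.le
      (sub_add_cancel 1 t)
    rwa [show (1 - t) • p + t • u = p + t • (u - p) by module] at h
  have hexpand : wnormSq S (p + t • (u - p) - y) =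
      wnormSq S (p - y) + 2 * t * ((u - p) ⬝ᵥ (S *ᵥ (p - y))) +
        t ^ 2 * wnormSq S (u - p) := by
    rw [show p + t • (u - p) - y = (p - y) + t • (u - p) by module, wnormSq_add_smul hS.eq]
  have hmin := hp (p + t • (u - p))
  rw [hexpand] at hmin
  have : 0 ≤ t * (g u - g p + (u - p) ⬝ᵥ (S *ᵥ (p - y)) +
      t * ((1 / 2) * wnormSq S (u - p))) := by nlinarith
  exact nonneg_of_mul_nonneg_right this ht0

lemma IsWProx.wnormSq_sub_le (hg : ConvexOn ℝ Set.univ g) (hS : S.IsSymm)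
    {y₁ y₂ p₁ p₂ : Fin N → ℝ} (hp₁ : IsWProx g S y₁ p₁) (hp₂ : IsWProx g S y₂ p₂) :
    wnormSq S (p₁ - p₂) ≤ (p₁ - p₂) ⬝ᵥ (S *ᵥ (y₁ - y₂)) := by
  have h₁ := hp₁.variational_ineq hg hS p₂
  have h₂ := hp₂.variational_ineq hg hS p₁
  have hsplit : (p₁ - p₂) ⬝ᵥ (S *ᵥ (y₁ - y₂)) - wnormSq S (p₁ - p₂) =
      (p₂ - p₁) ⬝ᵥ (S *ᵥ (p₁ - y₁)) + (p₁ - p₂) ⬝ᵥ (S *ᵥ (p₂ - y₂)) := by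
    simp only [wnormSq, mulVec_sub, dotProduct_sub, sub_dotProduct]
    ring
  linarith

end WeightedProx

theorem stmt7_general {N r : ℕ} (g : (Fin N → ℝ) → ℝ)
    (hg : ConvexOn ℝ Set.univ g)
    (S : Matrix (Fin N) (Fin N) ℝ) (hS : S.PosDef)
    (U : Matrix (Fin N) (Fin r) ℝ)
    (Pr : (Fin N → ℝ) → (Fin N → ℝ)) (hPr : ∀ y, IsWProx g S y (Pr y))
    (x : Fin N → ℝ) :
    ∀ β₁ β₂ : Fin r → ℝ,
      Uᵀ *ᵥ (x - Pr (x - S⁻¹ *ᵥ (U *ᵥ β₁))) + β₁ = 0 →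
      Uᵀ *ᵥ (x - Pr (x - S⁻¹ *ᵥ (U *ᵥ β₂))) + β₂ = 0 →
      β₁ = β₂ := by
  intro β₁ β₂ h₁ h₂
  set y₁ := x - S⁻¹ *ᵥ (U *ᵥ β₁)
  set y₂ := x - S⁻¹ *ᵥ (U *ᵥ β₂)
  have hUp : Uᵀ *ᵥ (Pr y₁ - Pr y₂) = β₁ - β₂ := by
    rw [← sub_sub_sub_cancel_left _ _ x, mulVec_sub, eq_neg_of_add_eq_zero_left h₁,
      eq_neg_of_add_eq_zero_left h₂]
    abel
  have hSS : S * S⁻¹ = 1 := mul_nonsing_inv S (isUnit_iff_ne_zero.2 hS.det_pos.ne')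
  have hcross : (Pr y₁ - Pr y₂) ⬝ᵥ (S *ᵥ (y₁ - y₂)) = -((β₁ - β₂) ⬝ᵥ (β₁ - β₂)) := by
    rw [sub_sub_sub_cancel_left, ← mulVec_sub, ← mulVec_sub, mulVec_mulVec, hSS, one_mulVec,
      dotProduct_mulVec, ← mulVec_transpose, hUp, dotProduct_comm, ← neg_sub β₁ β₂,
      neg_dotProduct]
  have hle := (hPr y₁).wnormSq_sub_le hg (isHermitian_iff_isSymm.1 hS.isHermitian) (hPr y₂)
  rw [hcross] at hle
  have hd : (β₁ - β₂) ⬝ᵥ (β₁ - β₂) = 0 :=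
    le_antisymm (by linarith [wnormSq_nonneg hS.posSemidef (Pr y₁ - Pr y₂)])
      (dotProduct_self_star_nonneg _)
  exact sub_eq_zero.1 (dotProduct_self_eq_zero.1 hd)

/-- Uniqueness of the auxiliary root: the map
`φ(β) = Uᵀ(x − prox_g^Σ(x − Σ⁻¹Uβ)) + β` has at most one zero. -/
theorem stmt7 {N r : ℕ} (g : (Fin N → ℝ) → ℝ)
    (hg : ConvexOn ℝ Set.univ g) (hlsc : LowerSemicontinuous g)
    (S : Matrix (Fin N) (Fin N) ℝ) (hSd : S.IsDiag) (hS : S.PosDef)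
    (U : Matrix (Fin N) (Fin r) ℝ) (hW : (S + U * Uᵀ).PosDef)
    (Pr : (Fin N → ℝ) → (Fin N → ℝ)) (hPr : ∀ y, IsWProx g S y (Pr y))
    (x : Fin N → ℝ) :
    ∀ β₁ β₂ : Fin r → ℝ,
      Uᵀ *ᵥ (x - Pr (x - S⁻¹ *ᵥ (U *ᵥ β₁))) + β₁ = 0 →
      Uᵀ *ᵥ (x - Pr (x - S⁻¹ *ᵥ (U *ᵥ β₂))) + β₂ = 0 →
      β₁ = β₂ :=
  stmt7_general g hg S hS U Pr hPr x
end

section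
/- Lemma on the gradient of the dual objective: let h(P) = −‖w(P) − prox_{δ_𝒞}^B(w(P))‖²_B + ‖w(P)‖²_B where w(P) = v − c·B^{-1}d(P) with B symmetric positive definite, c > 0, and d linear. Then h is differentiable and ∇h(P) = −2c·dᵀ(prox_{δ_𝒞}^B(w(P))), i.e., the gradient is −2c times the adjoint of d applied to the weighted projection of w(P) onto 𝒞. -/
open Matrix

/-- dot product with a fixed vector as a continuous linear map -/
noncomputable def dotCLM {N : ℕ} (a : Fin N → ℝ) : (Fin N → ℝ) →L[ℝ] ℝ :=
  LinearMap.toContinuousLinearMap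
    { toFun := fun y => a ⬝ᵥ y
      map_add' := by intro x y; simp [dotProduct_add]
      map_smul' := by intro m x; simp }

@[simp] lemma dotCLM_apply {N : ℕ} (a y : Fin N → ℝ) : dotCLM a y = a ⬝ᵥ y := rfl

lemma abs_dotProduct_le {N : ℕ} (a b : Fin N → ℝ) : |a ⬝ᵥ b| ≤ (N : ℝ) * ‖a‖ * ‖b‖ := by
  calc |a ⬝ᵥ b| ≤ ∑ i, |a i * b i| := Finset.abs_sum_le_sum_abs _ _
    _ ≤ ∑ _i : Fin N, ‖a‖ * ‖b‖ := by
        refine Finset.sum_le_sum fun i _ => ?_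
        rw [abs_mul]
        have ha : |a i| ≤ ‖a‖ := by simpa using norm_le_pi_norm a i
        have hb : |b i| ≤ ‖b‖ := by simpa using norm_le_pi_norm b i
        exact mul_le_mul ha hb (abs_nonneg _) (norm_nonneg _)
    _ = (N : ℝ) * ‖a‖ * ‖b‖ := by simp [mul_assoc]

lemma exists_wnormSq_bound {N : ℕ} (B : Matrix (Fin N) (Fin N) ℝ) :
    ∃ K : ℝ, 0 ≤ K ∧ ∀ u : Fin N → ℝ, |wnormSq B u| ≤ K * ‖u‖ ^ 2 := by
  set T := LinearMap.toContinuousLinearMap (B.mulVecLin)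
  refine ⟨(N : ℝ) * ‖T‖, by positivity, fun u => ?_⟩
  have h1 : |u ⬝ᵥ (B *ᵥ u)| ≤ (N : ℝ) * ‖u‖ * ‖B *ᵥ u‖ := abs_dotProduct_le _ _
  have h2 : ‖B *ᵥ u‖ ≤ ‖T‖ * ‖u‖ := T.le_opNorm u
  have := mul_le_mul_of_nonneg_left h2 (by positivity : (0:ℝ) ≤ (N : ℝ) * ‖u‖)
  calc |wnormSq B u| ≤ (N : ℝ) * ‖u‖ * (‖T‖ * ‖u‖) := le_trans h1 this
    _ = (N : ℝ) * ‖T‖ * ‖u‖ ^ 2 := by ring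

/-- general: quadratic remainder bound gives differentiability -/
lemma hasFDerivAt_of_quadratic_bound {E : Type*} [NormedAddCommGroup E] [NormedSpace ℝ E]
    (f : E → ℝ) (L : E →L[ℝ] ℝ) (x : E) (K : ℝ)
    (h : ∀ y, |f y - f x - L (y - x)| ≤ K * ‖y - x‖ ^ 2) : HasFDerivAt f L x := by
  rw [hasFDerivAt_iff_isLittleO_nhds_zero]
  rw [Asymptotics.isLittleO_iff]
  intro ε hε
  have hK : (0:ℝ) < max K 1 := lt_max_of_lt_right one_pos
  filter_upwards [Metric.ball_mem_nhds (0 : E) (by positivity : 0 < ε / max K 1)] with z hz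
  have hb : ‖z‖ < ε / max K 1 := by simpa using hz
  have h0 := h (x + z)
  simp only [add_sub_cancel_left] at h0
  have : |f (x + z) - f x - L z| ≤ max K 1 * ‖z‖ ^ 2 := by
    refine h0.trans (mul_le_mul_of_nonneg_right (le_max_left _ _) (by positivity))
  calc ‖f (x + z) - f x - L z‖ ≤ max K 1 * ‖z‖ ^ 2 := this
    _ = (max K 1 * ‖z‖) * ‖z‖ := by ring
    _ ≤ ε * ‖z‖ := by
        refine mul_le_mul_of_nonneg_right ?_ (norm_nonneg _)
        have := mul_le_mul_of_nonneg_left hb.le hK.le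
        calc max K 1 * ‖z‖ ≤ max K 1 * (ε / max K 1) := this
          _ = ε := by field_simp

section ip
variable {N : ℕ} (B : Matrix (Fin N) (Fin N) ℝ)

noncomputable def ip (a b : Fin N → ℝ) : ℝ := a ⬝ᵥ (B *ᵥ b)

lemma ip_symm (hB : B.PosDef) (a b : Fin N → ℝ) : ip B a b = ip B b a := by
  have hsym : Bᵀ = B := by
    have := hB.1
    simpa [Matrix.IsHermitian, Matrix.conjTranspose_eq_transpose_of_trivial] using this
  rw [ip, ip, Matrix.dotProduct_mulVec, ← Matrix.mulVec_transpose, hsym, dotProduct_comm]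

lemma ip_self_nonneg (hB : B.PosDef) (a : Fin N → ℝ) : 0 ≤ ip B a a := by
  rcases eq_or_ne a 0 with rfl | h
  · simp [ip]
  · exact le_of_lt (by simpa [ip] using hB.dotProduct_mulVec_pos h)

lemma wnormSq_eq_ip (a : Fin N → ℝ) : wnormSq B a = ip B a a := rfl

lemma ip_add_left (a b c : Fin N → ℝ) : ip B (a + b) c = ip B a c + ip B b c := by
  simp [ip, add_dotProduct]
lemma ip_add_right (a b c : Fin N → ℝ) : ip B a (b + c) = ip B a b + ip B a c := by
  simp [ip, Matrix.mulVec_add, dotProduct_add]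
lemma ip_neg_left (a b : Fin N → ℝ) : ip B (-a) b = -ip B a b := by
  simp [ip, neg_dotProduct]
lemma ip_neg_right (a b : Fin N → ℝ) : ip B a (-b) = -ip B a b := by
  simp [ip, Matrix.mulVec_neg, dotProduct_neg]
lemma ip_sub_left (a b c : Fin N → ℝ) : ip B (a - b) c = ip B a c - ip B b c := by
  simp [sub_eq_add_neg, ip_add_left, ip_neg_left]
lemma ip_sub_right (a b c : Fin N → ℝ) : ip B a (b - c) = ip B a b - ip B a c := by
  simp [sub_eq_add_neg, ip_add_right, ip_neg_right]
lemma ip_smul_left (t : ℝ) (a b : Fin N → ℝ) : ip B (t • a) b = t * ip B a b := by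
  simp [ip, smul_dotProduct, smul_eq_mul]
lemma ip_smul_right (t : ℝ) (a b : Fin N → ℝ) : ip B a (t • b) = t * ip B a b := by
  simp [ip, Matrix.mulVec_smul, dotProduct_smul, smul_eq_mul]

lemma nsq_add (hB : B.PosDef) (a b : Fin N → ℝ) :
    ip B (a + b) (a + b) = ip B a a + 2 * ip B a b + ip B b b := by
  rw [ip_add_left, ip_add_right, ip_add_right, ip_symm B hB b a]; ring

lemma two_ip_le (hB : B.PosDef) (a b : Fin N → ℝ) : 2 * ip B a b ≤ ip B a a + ip B b b := by
  have h := ip_self_nonneg B hB (a - b)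
  rw [ip_sub_left, ip_sub_right, ip_sub_right, ip_symm B hB b a] at h
  linarith

end ip

section proj
variable {N : ℕ} (B : Matrix (Fin N) (Fin N) ℝ) (hB : B.PosDef)
  (C : Set (Fin N → ℝ)) (hCconv : Convex ℝ C)
  (Proj : (Fin N → ℝ) → (Fin N → ℝ))
  (hProj : ∀ y, Proj y ∈ C ∧ ∀ u ∈ C, wnormSq B (Proj y - y) ≤ wnormSq B (u - y))

include hB hCconv hProj

/-- variational inequality -/
lemma proj_vi (x : Fin N → ℝ) : ∀ u ∈ C, ip B (x - Proj x) (u - Proj x) ≤ 0 := by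
  intro u hu
  set P := Proj x
  have key : ∀ t : ℝ, 0 < t → t ≤ 1 →
      ip B (x - P) (u - P) ≤ t / 2 * ip B (u - P) (u - P) := by
    intro t ht ht1
    have hz : P + t • (u - P) ∈ C := by
      have := hCconv (hProj x).1 hu (by linarith : (0:ℝ) ≤ 1 - t) ht.le (by ring)
      convert this using 1
      module
    have hmin := (hProj x).2 _ hz
    rw [wnormSq_eq_ip, wnormSq_eq_ip] at hmin
    have hexp : P + t • (u - P) - x = (P - x) + t • (u - P) := by module
    rw [hexp, nsq_add B hB] at hmin
    rw [ip_smul_right, ip_smul_left, ip_smul_right] at hmin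
    have hflip : ip B (P - x) (u - P) = -ip B (x - P) (u - P) := by
      rw [show P - x = -(x - P) by module, ip_neg_left]
    rw [hflip] at hmin
    nlinarith [ip_self_nonneg B hB (u - P), sq_nonneg t]
  by_contra hpos
  push_neg at hpos
  set e := ip B (x - P) (u - P) with he
  set M := ip B (u - P) (u - P) / 2 with hM
  have hM0 : 0 ≤ M := by
    have := ip_self_nonneg B hB (u - P); rw [hM]; linarith
  have ht' := key (min 1 (e / (M + 1)))
    (lt_min one_pos (by positivity)) (min_le_left _ _)
  have : min 1 (e / (M + 1)) / 2 * (2 * M) ≤ (e / (M + 1)) * M := by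
    have h1 : min 1 (e / (M + 1)) ≤ e / (M + 1) := min_le_right _ _
    nlinarith
  have hlt : (e / (M + 1)) * M < e := by
    rw [div_mul_eq_mul_div, div_lt_iff₀ (by linarith)]
    nlinarith
  have h2M : 2 * M = ip B (u - P) (u - P) := by rw [hM]; ring
  rw [← h2M] at ht'
  linarith

/-- firm monotonicity -/
lemma proj_firm (x y : Fin N → ℝ) :
    ip B (Proj y - Proj x) (Proj y - Proj x) ≤ ip B (Proj y - Proj x) (y - x) := by
  have h1 := proj_vi B hB C hCconv Proj hProj x (Proj y) (hProj y).1
  have h2 := proj_vi B hB C hCconv Proj hProj y (Proj x) (hProj x).1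
  have h2' : ip B (Proj y - y) (Proj y - Proj x) ≤ 0 := by
    have : ip B (y - Proj y) (Proj x - Proj y) =
        ip B (Proj y - y) (Proj y - Proj x) := by
      rw [show y - Proj y = -(Proj y - y) by module, show Proj x - Proj y = -(Proj y - Proj x) by module,
        ip_neg_left, ip_neg_right]; ring
    linarith [this ▸ h2]
  have hsum : ip B ((x - Proj x) + (Proj y - y)) (Proj y - Proj x) ≤ 0 := by
    rw [ip_add_left]; linarith
  have hexp : (x - Proj x) + (Proj y - y) = (x - y) + (Proj y - Proj x) := by module
  rw [hexp, ip_add_left] at hsum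
  have : ip B (x - y) (Proj y - Proj x) = -ip B (Proj y - Proj x) (y - x) := by
    rw [ip_symm B hB, show x - y = -(y - x) by module, ip_neg_right]
  linarith [this ▸ hsum]

/-- the key two-sided quadratic bound for g y = ‖y − Proj y‖²_B -/
lemma proj_sq_bound (x y : Fin N → ℝ) :
    |wnormSq B (y - Proj y) - wnormSq B (x - Proj x)
      - 2 * ip B (x - Proj x) (y - x)| ≤ ip B (y - x) (y - x) := by
  set Px := Proj x; set Py := Proj y
  have hgx : wnormSq B (x - Px) = ip B (x - Px) (x - Px) := rfl
  have hgy : wnormSq B (y - Py) = ip B (y - Py) (y - Py) := rfl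
  have hneg : ∀ a b : Fin N → ℝ, ip B (a - b) (a - b) = ip B (b - a) (b - a) := by
    intro a b
    rw [show a - b = -(b - a) by module, ip_neg_left, ip_neg_right]; ring
  -- upper bound: g y ≤ ‖y - Px‖²
  have hup : ip B (y - Py) (y - Py) ≤ ip B (y - Px) (y - Px) := by
    have := (hProj y).2 Px (hProj x).1
    rw [wnormSq_eq_ip, wnormSq_eq_ip] at this
    calc ip B (y - Py) (y - Py) = ip B (Py - y) (Py - y) := hneg _ _
      _ ≤ ip B (Px - y) (Px - y) := this
      _ = ip B (y - Px) (y - Px) := hneg _ _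
  have hexp1 : ip B (y - Px) (y - Px)
      = ip B (x - Px) (x - Px) + 2 * ip B (x - Px) (y - x) + ip B (y - x) (y - x) := by
    rw [show y - Px = (x - Px) + (y - x) by module, nsq_add B hB]
  -- lower bound: g x ≤ ‖x - Py‖²
  have hlow : ip B (x - Px) (x - Px) ≤ ip B (x - Py) (x - Py) := by
    have := (hProj x).2 Py (hProj y).1
    rw [wnormSq_eq_ip, wnormSq_eq_ip] at this
    calc ip B (x - Px) (x - Px) = ip B (Px - x) (Px - x) := hneg _ _
      _ ≤ ip B (Py - x) (Py - x) := this
      _ = ip B (x - Py) (x - Py) := hneg _ _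
  have hexp2 : ip B (x - Py) (x - Py)
      = ip B (y - Py) (y - Py) + 2 * ip B (y - Py) (x - y) + ip B (x - y) (x - y) := by
    rw [show x - Py = (y - Py) + (x - y) by module, nsq_add B hB]
  have hxy : ip B (x - y) (x - y) = ip B (y - x) (y - x) := hneg _ _
  -- control cross term: ip (Py - Px) (y - x) ≤ ip (y-x)(y-x)
  have hfirm := proj_firm B hB C hCconv Proj hProj x y
  have hcs := two_ip_le B hB (Proj y - Proj x) (y - x)
  have hcross : ip B (Py - Px) (y - x) ≤ ip B (y - x) (y - x) := by linarith
  -- assemble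
  have hys : ip B (y - Py) (x - y) = -ip B (y - Py) (y - x) := by
    rw [show x - y = -(y - x) by module, ip_neg_right]
  have hsplit : ip B (y - Py) (y - x)
      = ip B (y - x) (y - x) - ip B (Py - Px) (y - x) + ip B (x - Px) (y - x) := by
    rw [show y - Py = (y - x) - (Py - Px) + (x - Px) by module, ip_add_left, ip_sub_left]
    try ring
  rw [hgx, hgy, abs_le]
  constructor
  · nlinarith
  · nlinarith
end proj


section gderiv
variable {N : ℕ} (B : Matrix (Fin N) (Fin N) ℝ)

lemma ip_eq_dot (hB : B.PosDef) (a u : Fin N → ℝ) : ip B a u = (B *ᵥ a) ⬝ᵥ u := by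
  rw [ip_symm B hB, ip, dotProduct_comm]

lemma g_hasFDerivAt (hB : B.PosDef)
    (C : Set (Fin N → ℝ)) (hCconv : Convex ℝ C)
    (Proj : (Fin N → ℝ) → (Fin N → ℝ))
    (hProj : ∀ y, Proj y ∈ C ∧ ∀ u ∈ C, wnormSq B (Proj y - y) ≤ wnormSq B (u - y))
    (x : Fin N → ℝ) :
    HasFDerivAt (fun y => wnormSq B (y - Proj y))
      (dotCLM ((2:ℝ) • (B *ᵥ (x - Proj x)))) x := by
  obtain ⟨K, hK0, hK⟩ := exists_wnormSq_bound B
  refine hasFDerivAt_of_quadratic_bound _ _ _ K fun y => ?_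
  have hL : dotCLM ((2:ℝ) • (B *ᵥ (x - Proj x))) (y - x)
      = 2 * ip B (x - Proj x) (y - x) := by
    rw [dotCLM_apply, smul_dotProduct, smul_eq_mul, ← ip_eq_dot B hB]
  rw [hL]
  calc |wnormSq B (y - Proj y) - wnormSq B (x - Proj x) - 2 * ip B (x - Proj x) (y - x)|
      ≤ ip B (y - x) (y - x) := proj_sq_bound B hB C hCconv Proj hProj x y
    _ ≤ |wnormSq B (y - x)| := le_abs_self _
    _ ≤ K * ‖y - x‖ ^ 2 := hK _

lemma q_hasFDerivAt (hB : B.PosDef) (x : Fin N → ℝ) :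
    HasFDerivAt (wnormSq B) (dotCLM ((2:ℝ) • (B *ᵥ x))) x := by
  obtain ⟨K, hK0, hK⟩ := exists_wnormSq_bound B
  refine hasFDerivAt_of_quadratic_bound _ _ _ K fun y => ?_
  have hL : dotCLM ((2:ℝ) • (B *ᵥ x)) (y - x) = 2 * ip B x (y - x) := by
    rw [dotCLM_apply, smul_dotProduct, smul_eq_mul, ← ip_eq_dot B hB]
  have hexp : wnormSq B y = wnormSq B x + 2 * ip B x (y - x) + ip B (y - x) (y - x) := by
    rw [wnormSq_eq_ip, wnormSq_eq_ip, show y = x + (y - x) by module, nsq_add B hB]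
    simp [show x + (y - x) - x = y - x by module]
  have hre : wnormSq B y - wnormSq B x - 2 * ip B x (y - x) = wnormSq B (y - x) := by
    rw [hexp, wnormSq_eq_ip B (y - x)]; ring
  rw [hL, hre]
  exact hK _

end gderiv


/-- Gradient of the dual objective
`h(P) = −‖w(P) − prox_{δ_C}^B(w(P))‖²_B + ‖w(P)‖²_B`, `w(P) = v − c·B⁻¹ d(P)`:
`h` is differentiable with `∇h(P) = −2c·dᵀ(prox_{δ_C}^B(w(P)))`, i.e. the derivative at `P`
acts on `Q` as `−2c ⟨d(Q), proj_B(w(P))⟩`. -/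
theorem stmt14 {d N : ℕ} (B : Matrix (Fin N) (Fin N) ℝ) (hB : B.PosDef)
    (C : Set (Fin N → ℝ)) (hCcl : IsClosed C) (hCconv : Convex ℝ C) (hCne : C.Nonempty)
    (Proj : (Fin N → ℝ) → (Fin N → ℝ))
    (hProj : ∀ y, Proj y ∈ C ∧ ∀ u ∈ C, wnormSq B (Proj y - y) ≤ wnormSq B (u - y))
    (dm : (Fin d → Fin N → ℝ) →ₗ[ℝ] (Fin N → ℝ)) (v : Fin N → ℝ)
    (c : ℝ) (hc : 0 < c) :
    ∀ P : Fin d → Fin N → ℝ, ∃ L : (Fin d → Fin N → ℝ) →L[ℝ] ℝ,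
      HasFDerivAt (fun Q =>
        -(wnormSq B ((v - c • (B⁻¹ *ᵥ dm Q)) - Proj (v - c • (B⁻¹ *ᵥ dm Q))))
          + wnormSq B (v - c • (B⁻¹ *ᵥ dm Q))) L P ∧
      ∀ Q, L Q = -2 * c * ((dm Q) ⬝ᵥ Proj (v - c • (B⁻¹ *ᵥ dm P))) := by
  intro P
  -- the affine inner map
  set W : (Fin d → Fin N → ℝ) →L[ℝ] (Fin N → ℝ) :=
    LinearMap.toContinuousLinearMap ((-c) • ((B⁻¹).mulVecLin ∘ₗ dm)) with hW
  have hWapp : ∀ Q, W Q = -c • (B⁻¹ *ᵥ dm Q) := by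
    intro Q
    simp [hW, LinearMap.coe_toContinuousLinearMap', Matrix.mulVecLin_apply]
  set w : (Fin d → Fin N → ℝ) → (Fin N → ℝ) := fun Q => v - c • (B⁻¹ *ᵥ dm Q) with hw
  have hwW : HasFDerivAt w W P := by
    have h1 : HasFDerivAt (fun Q => v + W Q) W P := (W.hasFDerivAt).const_add v
    refine h1.congr_of_eventuallyEq (Filter.Eventually.of_forall fun Q => ?_)
    show v - c • (B⁻¹ *ᵥ dm Q) = v + W Q
    rw [hWapp Q]
    module
  set z0 := w P with hz0
  have hg := g_hasFDerivAt B hB C hCconv Proj hProj z0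
  have hq := q_hasFDerivAt B hB z0
  have hf : HasFDerivAt (fun z => -(wnormSq B (z - Proj z)) + wnormSq B z)
      (-(dotCLM ((2:ℝ) • (B *ᵥ (z0 - Proj z0)))) + dotCLM ((2:ℝ) • (B *ᵥ z0))) z0 :=
    hg.neg.add hq
  refine ⟨(-(dotCLM ((2:ℝ) • (B *ᵥ (z0 - Proj z0)))) + dotCLM ((2:ℝ) • (B *ᵥ z0))).comp W,
    ?_, ?_⟩
  · exact hf.comp P hwW
  · intro Q
    have hBinv : B * B⁻¹ = 1 :=
      Matrix.mul_nonsing_inv B (isUnit_iff_ne_zero.mpr hB.det_pos.ne')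
    have hkey : ∀ a : Fin N → ℝ, (B *ᵥ a) ⬝ᵥ (B⁻¹ *ᵥ dm Q) = a ⬝ᵥ dm Q := by
      intro a
      rw [dotProduct_comm, ← ip, ip_symm B hB, ip, Matrix.mulVec_mulVec, hBinv]
      simp
    have hcomp : ((-(dotCLM ((2:ℝ) • (B *ᵥ (z0 - Proj z0)))) + dotCLM ((2:ℝ) • (B *ᵥ z0))).comp W) Q
        = -(((2:ℝ) • (B *ᵥ (z0 - Proj z0))) ⬝ᵥ W Q) + ((2:ℝ) • (B *ᵥ z0)) ⬝ᵥ W Q := by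
      simp
    rw [hcomp, hWapp Q]
    simp only [smul_dotProduct, Matrix.mulVec_sub, sub_dotProduct, dotProduct_smul, hkey, smul_eq_mul]
    rw [show (dm Q) ⬝ᵥ Proj (v - c • (B⁻¹ *ᵥ dm P)) = Proj z0 ⬝ᵥ dm Q from dotProduct_comm _ _]
    ring
end

section
/- Lipschitz bound for the dual gradient: in the setting of the previous lemma, the gradient ∇h(P) = −2c·dᵀ(prox_{δ_𝒞}^B(w(P))) with w(P) = v − c·B^{-1}d(P) is Lipschitz with constant 2c²·ω·‖d‖², where ω is such that ‖B^{-1}y‖_B ≤ √ω‖y‖ for all y (one can take ω = 1/λ_min(B)), and ‖d‖ is the operator norm of the linear map d. -/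
open Matrix

/-- Frobenius norm of `P ∈ ℝ^{d×N}` (rows `P n`). -/
noncomputable def fnorm {d N : ℕ} (A : Fin d → Fin N → ℝ) : ℝ :=
  Real.sqrt (∑ n, (A n) ⬝ᵥ (A n))

lemma bf_symm {N : ℕ} (B : Matrix (Fin N) (Fin N) ℝ) (hB : B.PosDef) (x y : Fin N → ℝ) :
    x ⬝ᵥ (B *ᵥ y) = y ⬝ᵥ (B *ᵥ x) := by
  have hBT : Bᵀ = B := hB.isHermitian
  rw [Matrix.dotProduct_mulVec, ← Matrix.mulVec_transpose, hBT, dotProduct_comm]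

lemma bf_nonneg {N : ℕ} (B : Matrix (Fin N) (Fin N) ℝ) (hB : B.PosDef) (x : Fin N → ℝ) :
    0 ≤ x ⬝ᵥ (B *ᵥ x) := hB.posSemidef.re_dotProduct_nonneg x

lemma bf_expand2 {N : ℕ} (B : Matrix (Fin N) (Fin N) ℝ) (hB : B.PosDef) (x y : Fin N → ℝ)
    (r s : ℝ) :
    (r • x + s • y) ⬝ᵥ (B *ᵥ (r • x + s • y))
      = r ^ 2 * (x ⬝ᵥ (B *ᵥ x)) + 2 * r * s * (x ⬝ᵥ (B *ᵥ y)) + s ^ 2 * (y ⬝ᵥ (B *ᵥ y)) := by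
  simp only [Matrix.mulVec_add, Matrix.mulVec_smul, dotProduct_add, add_dotProduct,
    dotProduct_smul, smul_dotProduct, smul_eq_mul]
  rw [bf_symm B hB y x]
  ring

lemma bf_expand {N : ℕ} (B : Matrix (Fin N) (Fin N) ℝ) (hB : B.PosDef) (x y : Fin N → ℝ) (s : ℝ) :
    (x + s • y) ⬝ᵥ (B *ᵥ (x + s • y))
      = x ⬝ᵥ (B *ᵥ x) + 2 * s * (x ⬝ᵥ (B *ᵥ y)) + s ^ 2 * (y ⬝ᵥ (B *ᵥ y)) := by
  have := bf_expand2 B hB x y 1 s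
  simpa using this

lemma bf_cs {N : ℕ} (B : Matrix (Fin N) (Fin N) ℝ) (hB : B.PosDef) (x y : Fin N → ℝ) :
    x ⬝ᵥ (B *ᵥ y) ≤ Real.sqrt (x ⬝ᵥ (B *ᵥ x)) * Real.sqrt (y ⬝ᵥ (B *ᵥ y)) := by
  have hA : 0 ≤ x ⬝ᵥ (B *ᵥ x) := bf_nonneg B hB x
  have hbn : 0 ≤ y ⬝ᵥ (B *ᵥ y) := bf_nonneg B hB y
  have key : (x ⬝ᵥ (B *ᵥ y)) ^ 2 ≤ (x ⬝ᵥ (B *ᵥ x)) * (y ⬝ᵥ (B *ᵥ y)) := by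
    rcases eq_or_lt_of_le hbn with hb | hbp
    · have h2 := bf_nonneg B hB ((2 * (x ⬝ᵥ (B *ᵥ y))) • x + (-(x ⬝ᵥ (B *ᵥ x) + 1)) • y)
      rw [bf_expand2 B hB x y (2 * (x ⬝ᵥ (B *ᵥ y))) (-(x ⬝ᵥ (B *ᵥ x) + 1)), ← hb] at h2
      nlinarith [sq_nonneg (x ⬝ᵥ (B *ᵥ y))]
    · have h2 := bf_nonneg B hB ((y ⬝ᵥ (B *ᵥ y)) • x + (-(x ⬝ᵥ (B *ᵥ y))) • y)
      rw [bf_expand2 B hB x y _ _] at h2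
      nlinarith [hbp]
  calc x ⬝ᵥ (B *ᵥ y) ≤ |x ⬝ᵥ (B *ᵥ y)| := le_abs_self _
    _ = Real.sqrt ((x ⬝ᵥ (B *ᵥ y)) ^ 2) := (Real.sqrt_sq_eq_abs _).symm
    _ ≤ Real.sqrt ((x ⬝ᵥ (B *ᵥ x)) * (y ⬝ᵥ (B *ᵥ y))) := Real.sqrt_le_sqrt key
    _ = _ := Real.sqrt_mul hA _

lemma bf_sub_expand {N : ℕ} (B : Matrix (Fin N) (Fin N) ℝ) (hB : B.PosDef) (a b c e : Fin N → ℝ) :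
    (a - b) ⬝ᵥ (B *ᵥ (c - e))
      = a ⬝ᵥ (B *ᵥ c) - a ⬝ᵥ (B *ᵥ e) - b ⬝ᵥ (B *ᵥ c) + b ⬝ᵥ (B *ᵥ e) := by
  simp only [Matrix.mulVec_sub, dotProduct_sub, sub_dotProduct]
  ring

lemma proj_vi_s15 {N : ℕ} (B : Matrix (Fin N) (Fin N) ℝ) (hB : B.PosDef)
    (C : Set (Fin N → ℝ)) (hCconv : Convex ℝ C)
    (Proj : (Fin N → ℝ) → (Fin N → ℝ))
    (hProj : ∀ y, Proj y ∈ C ∧ ∀ u ∈ C, wnormSq B (Proj y - y) ≤ wnormSq B (u - y))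
    (w : Fin N → ℝ) : ∀ u ∈ C, 0 ≤ (Proj w - w) ⬝ᵥ (B *ᵥ (u - Proj w)) := by
  intro u hu
  set p := Proj w with hp
  set A := (p - w) ⬝ᵥ (B *ᵥ (u - p)) with hA
  set Bq := (u - p) ⬝ᵥ (B *ᵥ (u - p)) with hBq
  have hBqn : 0 ≤ Bq := bf_nonneg B hB _
  have key : ∀ t : ℝ, 0 < t → t ≤ 1 → 0 ≤ 2 * t * A + t ^ 2 * Bq := by
    intro t ht0 ht1
    have hmem : p + t • (u - p) ∈ C := by
      have hmm := hCconv (hProj w).1 hu (by linarith : (0:ℝ) ≤ 1 - t) ht0.le (by ring)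
      have hre : p + t • (u - p) = (1 - t) • p + t • u := by
        rw [smul_sub, sub_smul, one_smul]; abel
      rw [hre]; exact hmm
    have h1 := (hProj w).2 _ hmem
    have h2 : wnormSq B (p + t • (u - p) - w) = wnormSq B (p - w) + 2 * t * A + t ^ 2 * Bq := by
      have : p + t • (u - p) - w = (p - w) + t • (u - p) := by abel
      rw [wnormSq, this, bf_expand B hB (p - w) (u - p) t]
      rfl
    rw [h2] at h1
    have h3 : wnormSq B (p - w) ≤ wnormSq B (p - w) + 2 * t * A + t ^ 2 * Bq := h1
    linarith
  by_contra hAneg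
  push_neg at hAneg
  rcases eq_or_lt_of_le hBqn with hq | hq
  · have := key 1 one_pos le_rfl
    rw [← hq] at this
    linarith
  · rcases le_or_gt (-A / Bq) 1 with hle | hgt
    · have htpos : 0 < -A / Bq := div_pos (by linarith) hq
      have := key (-A / Bq) htpos hle
      have he : 2 * (-A / Bq) * A + (-A / Bq) ^ 2 * Bq = -(A ^ 2 / Bq) := by
        field_simp
        ring
      rw [he] at this
      have : A ^ 2 / Bq ≤ 0 := by linarith
      have hApos : 0 < A ^ 2 := by nlinarith
      have := div_pos hApos hq
      linarith
    · have := key 1 one_pos le_rfl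
      rw [lt_div_iff₀ hq] at hgt
      nlinarith

lemma proj_nonexp {N : ℕ} (B : Matrix (Fin N) (Fin N) ℝ) (hB : B.PosDef)
    (C : Set (Fin N → ℝ)) (hCconv : Convex ℝ C)
    (Proj : (Fin N → ℝ) → (Fin N → ℝ))
    (hProj : ∀ y, Proj y ∈ C ∧ ∀ u ∈ C, wnormSq B (Proj y - y) ≤ wnormSq B (u - y))
    (w₁ w₂ : Fin N → ℝ) :
    Real.sqrt (wnormSq B (Proj w₁ - Proj w₂)) ≤ Real.sqrt (wnormSq B (w₁ - w₂)) := by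
  set p₁ := Proj w₁ with hp1
  set p₂ := Proj w₂ with hp2
  have h1 := proj_vi_s15 B hB C hCconv Proj hProj w₁ (Proj w₂) (hProj w₂).1
  have h2 := proj_vi_s15 B hB C hCconv Proj hProj w₂ (Proj w₁) (hProj w₁).1
  rw [← hp1, ← hp2] at h1 h2
  -- derive (p₁-p₂)⬝B(p₁-p₂) ≤ (p₁-p₂)⬝B(w₁-w₂)
  have key : (p₁ - p₂) ⬝ᵥ (B *ᵥ (p₁ - p₂)) ≤ (p₁ - p₂) ⬝ᵥ (B *ᵥ (w₁ - w₂)) := by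
    rw [bf_sub_expand B hB] at h1 h2 ⊢
    rw [bf_sub_expand B hB]
    have s1 := bf_symm B hB p₁ p₂
    have s2 := bf_symm B hB w₁ p₂
    have s3 := bf_symm B hB w₂ p₁
    have s4 := bf_symm B hB w₁ p₁
    have s5 := bf_symm B hB w₂ p₂
    linarith
  have hcs := bf_cs B hB (p₁ - p₂) (w₁ - w₂)
  have hdd : 0 ≤ (p₁ - p₂) ⬝ᵥ (B *ᵥ (p₁ - p₂)) := bf_nonneg B hB _
  have hsq : Real.sqrt (wnormSq B (p₁ - p₂)) ^ 2 = (p₁ - p₂) ⬝ᵥ (B *ᵥ (p₁ - p₂)) :=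
    Real.sq_sqrt hdd
  rcases eq_or_lt_of_le (Real.sqrt_nonneg (wnormSq B (p₁ - p₂))) with h0 | h0
  · rw [← h0]; exact Real.sqrt_nonneg _
  · have : Real.sqrt (wnormSq B (p₁ - p₂)) ^ 2
        ≤ Real.sqrt (wnormSq B (p₁ - p₂)) * Real.sqrt (wnormSq B (w₁ - w₂)) := by
      rw [hsq]
      calc (p₁ - p₂) ⬝ᵥ (B *ᵥ (p₁ - p₂)) ≤ (p₁ - p₂) ⬝ᵥ (B *ᵥ (w₁ - w₂)) := key
        _ ≤ _ := hcs
    nlinarith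

lemma dot_self_nonneg'_s15 {N : ℕ} (x : Fin N → ℝ) : 0 ≤ x ⬝ᵥ x :=
  Finset.sum_nonneg fun _ _ => mul_self_nonneg _

lemma fnorm_nonneg' {d N : ℕ} (A : Fin d → Fin N → ℝ) : 0 ≤ fnorm A := Real.sqrt_nonneg _

lemma fnorm_sq {d N : ℕ} (A : Fin d → Fin N → ℝ) : fnorm A ^ 2 = ∑ n, (A n) ⬝ᵥ (A n) :=
  Real.sq_sqrt (Finset.sum_nonneg fun n _ => dot_self_nonneg'_s15 (A n))

lemma fnorm_smul {d N : ℕ} (s : ℝ) (A : Fin d → Fin N → ℝ) :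
    fnorm (s • A) = |s| * fnorm A := by
  unfold fnorm
  have h : ∀ n, ((s • A) n) ⬝ᵥ ((s • A) n) = s ^ 2 * ((A n) ⬝ᵥ (A n)) := by
    intro n
    simp only [Pi.smul_apply, smul_dotProduct, dotProduct_smul, smul_eq_mul]
    ring
  simp only [h, ← Finset.mul_sum]
  rw [Real.sqrt_mul (sq_nonneg s), Real.sqrt_sq_eq_abs]

lemma mulVec_inv_cancel {N : ℕ} (B : Matrix (Fin N) (Fin N) ℝ) (hB : B.PosDef)
    (z : Fin N → ℝ) : B *ᵥ (B⁻¹ *ᵥ z) = z := by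
  rw [Matrix.mulVec_mulVec, Matrix.mul_nonsing_inv B hB.det_pos.ne'.isUnit, Matrix.one_mulVec]

lemma adj_bound {d N : ℕ} (B : Matrix (Fin N) (Fin N) ℝ) (hB : B.PosDef)
    (dm : (Fin d → Fin N → ℝ) →ₗ[ℝ] (Fin N → ℝ))
    (dadj : (Fin N → ℝ) →ₗ[ℝ] (Fin d → Fin N → ℝ))
    (hadj : ∀ (y : Fin N → ℝ) (Q : Fin d → Fin N → ℝ),
      (dm Q) ⬝ᵥ y = ∑ n, (dadj y n) ⬝ᵥ (Q n))
    (ω dn : ℝ)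
    (hω : ∀ y : Fin N → ℝ,
      Real.sqrt (wnormSq B (B⁻¹ *ᵥ y)) ≤ Real.sqrt ω * Real.sqrt (y ⬝ᵥ y))
    (hdn : ∀ Q : Fin d → Fin N → ℝ, Real.sqrt ((dm Q) ⬝ᵥ (dm Q)) ≤ dn * fnorm Q)
    (hdn0 : 0 ≤ dn) (y : Fin N → ℝ) :
    fnorm (dadj y) ≤ Real.sqrt ω * dn * Real.sqrt (wnormSq B y) := by
  set F := fnorm (dadj y) with hF
  have hF0 : 0 ≤ F := fnorm_nonneg' _
  have hK0 : 0 ≤ Real.sqrt ω * dn * Real.sqrt (wnormSq B y) := by positivity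
  rcases eq_or_lt_of_le hF0 with h0 | h0
  · rw [← h0]; exact hK0
  have hFsq : F ^ 2 = (dm (dadj y)) ⬝ᵥ y := by
    rw [hF, fnorm_sq, hadj y (dadj y)]
  set z := dm (dadj y) with hz
  have hzy : z ⬝ᵥ y = (B⁻¹ *ᵥ z) ⬝ᵥ (B *ᵥ y) := by
    rw [bf_symm B hB (B⁻¹ *ᵥ z) y, mulVec_inv_cancel B hB, dotProduct_comm]
  have hcs := bf_cs B hB (B⁻¹ *ᵥ z) y
  have hω' := hω z
  have hd' := hdn (dadj y)
  rw [← hz, ← hF] at hd'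
  have hns : 0 ≤ Real.sqrt (y ⬝ᵥ (B *ᵥ y)) := Real.sqrt_nonneg _
  have step : F ^ 2 ≤ (Real.sqrt ω * dn * Real.sqrt (wnormSq B y)) * F := by
    rw [hFsq, hzy]
    calc (B⁻¹ *ᵥ z) ⬝ᵥ (B *ᵥ y)
        ≤ Real.sqrt ((B⁻¹ *ᵥ z) ⬝ᵥ (B *ᵥ (B⁻¹ *ᵥ z))) * Real.sqrt (y ⬝ᵥ (B *ᵥ y)) := hcs
      _ ≤ (Real.sqrt ω * Real.sqrt (z ⬝ᵥ z)) * Real.sqrt (y ⬝ᵥ (B *ᵥ y)) := by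
          apply mul_le_mul_of_nonneg_right _ hns
          exact hω'
      _ ≤ (Real.sqrt ω * (dn * F)) * Real.sqrt (y ⬝ᵥ (B *ᵥ y)) := by
          apply mul_le_mul_of_nonneg_right _ hns
          exact mul_le_mul_of_nonneg_left hd' (Real.sqrt_nonneg ω)
      _ = (Real.sqrt ω * dn * Real.sqrt (wnormSq B y)) * F := by
          rw [wnormSq]; ring
  nlinarith


/-- Lipschitz bound for the dual gradient `∇h(P) = −2c·dᵀ(prox_{δ_C}^B(w(P)))` with
`w(P) = v − c·B⁻¹d(P)`: it is Lipschitz with constant `2c²·ω·‖d‖²`, where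
`‖B⁻¹y‖_B ≤ √ω‖y‖` for all `y` and `‖d‖ ≤ dn` is the operator norm of `d`. -/
theorem stmt15 {d N : ℕ} (B : Matrix (Fin N) (Fin N) ℝ) (hB : B.PosDef)
    (C : Set (Fin N → ℝ)) (hCcl : IsClosed C) (hCconv : Convex ℝ C) (hCne : C.Nonempty)
    (Proj : (Fin N → ℝ) → (Fin N → ℝ))
    (hProj : ∀ y, Proj y ∈ C ∧ ∀ u ∈ C, wnormSq B (Proj y - y) ≤ wnormSq B (u - y))
    (dm : (Fin d → Fin N → ℝ) →ₗ[ℝ] (Fin N → ℝ))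
    (dadj : (Fin N → ℝ) →ₗ[ℝ] (Fin d → Fin N → ℝ))
    (hadj : ∀ (y : Fin N → ℝ) (Q : Fin d → Fin N → ℝ),
      (dm Q) ⬝ᵥ y = ∑ n, (dadj y n) ⬝ᵥ (Q n))
    (v : Fin N → ℝ) (c : ℝ) (hc : 0 < c) (ω dn : ℝ)
    (hω : ∀ y : Fin N → ℝ,
      Real.sqrt (wnormSq B (B⁻¹ *ᵥ y)) ≤ Real.sqrt ω * Real.sqrt (y ⬝ᵥ y))
    (hdn : ∀ Q : Fin d → Fin N → ℝ, Real.sqrt ((dm Q) ⬝ᵥ (dm Q)) ≤ dn * fnorm Q) :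
    ∀ P₁ P₂ : Fin d → Fin N → ℝ,
      fnorm (((-2 * c) • dadj (Proj (v - c • (B⁻¹ *ᵥ dm P₁))))
          - ((-2 * c) • dadj (Proj (v - c • (B⁻¹ *ᵥ dm P₂)))))
        ≤ 2 * c ^ 2 * ω * dn ^ 2 * fnorm (P₁ - P₂) := by
  intro P₁ P₂
  rcases Nat.eq_zero_or_pos N with hN | hN
  · subst hN
    simp [fnorm, dotProduct]
  rcases Nat.eq_zero_or_pos d with hd | hd
  · subst hd
    simp [fnorm]
  -- ω ≥ 0
  have hω0 : 0 ≤ ω := by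
    by_contra hneg
    push_neg at hneg
    have hsz : Real.sqrt ω = 0 := Real.sqrt_eq_zero_of_nonpos hneg.le
    set y : Fin N → ℝ := fun _ => 1 with hy
    have hy0 : y ≠ 0 := by
      intro h
      have := congrFun h ⟨0, hN⟩
      simp [hy] at this
    have hz0 : B⁻¹ *ᵥ y ≠ 0 := by
      intro h
      apply hy0
      rw [← mulVec_inv_cancel B hB y, h, Matrix.mulVec_zero]
    have hpos : 0 < wnormSq B (B⁻¹ *ᵥ y) := hB.re_dotProduct_pos hz0
    have := hω y
    rw [hsz, zero_mul] at this
    have hle : wnormSq B (B⁻¹ *ᵥ y) ≤ 0 :=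
      Real.sqrt_eq_zero'.mp (le_antisymm this (Real.sqrt_nonneg _))
    linarith
  -- dn ≥ 0
  have hdn0 : 0 ≤ dn := by
    set Q : Fin d → Fin N → ℝ := fun _ _ => 1 with hQ
    have hFQ : 0 < fnorm Q := by
      rw [fnorm, Real.sqrt_pos]
      apply Finset.sum_pos
      · intro n _
        simp only [hQ, dotProduct]
        simp
        positivity
      · haveI : Nonempty (Fin d) := Fin.pos_iff_nonempty.mp hd
        exact Finset.univ_nonempty
    have h1 := hdn Q
    have h2 : 0 ≤ dn * fnorm Q := le_trans (Real.sqrt_nonneg _) h1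
    nlinarith
  set w₁ := v - c • (B⁻¹ *ᵥ dm P₁) with hw₁
  set w₂ := v - c • (B⁻¹ *ᵥ dm P₂) with hw₂
  set p₁ := Proj w₁ with hp₁
  set p₂ := Proj w₂ with hp₂
  have hLHS : ((-2 * c) • dadj p₁) - ((-2 * c) • dadj p₂) = (-2 * c) • dadj (p₁ - p₂) := by
    rw [map_sub, smul_sub]
  rw [hLHS, fnorm_smul]
  have habs : |(-2 * c)| = 2 * c := by
    rw [abs_of_neg (by linarith : -2 * c < 0)]; ring
  rw [habs]
  -- step 1
  have h1 := adj_bound B hB dm dadj hadj ω dn hω hdn hdn0 (p₁ - p₂)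
  -- step 2: nonexpansiveness
  have h2 := proj_nonexp B hB C hCconv Proj hProj w₁ w₂
  -- step 3
  have h3 : w₁ - w₂ = (-c) • (B⁻¹ *ᵥ dm (P₁ - P₂)) := by
    rw [hw₁, hw₂, map_sub, Matrix.mulVec_sub]
    rw [smul_sub]
    module
  have h4 : Real.sqrt (wnormSq B (w₁ - w₂))
      = c * Real.sqrt (wnormSq B (B⁻¹ *ᵥ dm (P₁ - P₂))) := by
    rw [h3]
    have : wnormSq B ((-c) • (B⁻¹ *ᵥ dm (P₁ - P₂)))
        = c ^ 2 * wnormSq B (B⁻¹ *ᵥ dm (P₁ - P₂)) := by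
      rw [wnormSq, wnormSq, Matrix.mulVec_smul, dotProduct_smul, smul_dotProduct]
      simp only [smul_eq_mul]
      ring
    rw [this, Real.sqrt_mul (sq_nonneg c), Real.sqrt_sq hc.le]
  have h5 := hω (dm (P₁ - P₂))
  have h6 := hdn (P₁ - P₂)
  -- combine steps 2-6
  have hchain : Real.sqrt (wnormSq B (p₁ - p₂)) ≤ c * (Real.sqrt ω * (dn * fnorm (P₁ - P₂))) := by
    calc Real.sqrt (wnormSq B (p₁ - p₂)) ≤ Real.sqrt (wnormSq B (w₁ - w₂)) := h2
      _ = c * Real.sqrt (wnormSq B (B⁻¹ *ᵥ dm (P₁ - P₂))) := h4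
      _ ≤ c * (Real.sqrt ω * Real.sqrt ((dm (P₁ - P₂)) ⬝ᵥ (dm (P₁ - P₂)))) :=
          mul_le_mul_of_nonneg_left h5 hc.le
      _ ≤ c * (Real.sqrt ω * (dn * fnorm (P₁ - P₂))) := by
          apply mul_le_mul_of_nonneg_left _ hc.le
          exact mul_le_mul_of_nonneg_left h6 (Real.sqrt_nonneg ω)
  have h7 : fnorm (dadj (p₁ - p₂))
      ≤ Real.sqrt ω * dn * (c * (Real.sqrt ω * (dn * fnorm (P₁ - P₂)))) := by
    calc fnorm (dadj (p₁ - p₂)) ≤ Real.sqrt ω * dn * Real.sqrt (wnormSq B (p₁ - p₂)) := h1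
      _ ≤ Real.sqrt ω * dn * (c * (Real.sqrt ω * (dn * fnorm (P₁ - P₂)))) :=
          mul_le_mul_of_nonneg_left hchain (by positivity)
  have hss : Real.sqrt ω * Real.sqrt ω = ω := Real.mul_self_sqrt hω0
  calc 2 * c * fnorm (dadj (p₁ - p₂))
      ≤ 2 * c * (Real.sqrt ω * dn * (c * (Real.sqrt ω * (dn * fnorm (P₁ - P₂))))) :=
        mul_le_mul_of_nonneg_left h7 (by positivity)
    _ = 2 * c ^ 2 * (Real.sqrt ω * Real.sqrt ω) * dn ^ 2 * fnorm (P₁ - P₂) := by ring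
    _ = 2 * c ^ 2 * ω * dn ^ 2 * fnorm (P₁ - P₂) := by rw [hss]
end
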